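/- Let K = 6, let p_k = 1 − (k−1)/10 for k = 1, …, 6, and let q = (0.183, 0.075, 0.075, 0.175, 0.261, 0.231). Then Σ_{k=1}^{6} q_k p_k (1 − p_k)( q_k p_k / 2 + Σ_{ℓ=1}^{k−1} q_ℓ p_ℓ ) ≥ 0.3516 / 4. Consequently, for every directed social network G there exists a marketing strategy (π, p) with p_i ∈ {1, 0.9, 0.8, 0.7, 0.6, 0.5} for every buyer i such that R(π, p) ≥ 0.3516 · R_max(G). -/
import Mathlib


open Finset

/-- The revenue of a marketing strategy `(π, p)` on a directed social network. -/
noncomputable def drevenue {V : Type} [Fintype V] [DecidableEq V]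
    (w : V → V → ℝ) (π : V ≃ Fin (Fintype.card V)) (p : V → ℝ) : ℝ :=
  ∑ j, p j * (1 - p j) * ∑ i ∈ univ.filter (fun i => π i < π j), p i * w i j

/-- The maximum revenue of a directed social network. -/
noncomputable def dmaxRev {V : Type} [Fintype V] [DecidableEq V]
    (w : V → V → ℝ) : ℝ :=
  sSup {r | ∃ (π : V ≃ Fin (Fintype.card V)) (p : V → ℝ),
    (∀ i, 1/2 ≤ p i ∧ p i ≤ 1) ∧ r = drevenue w π p}

/-- The pricing probabilities of the `K = 6` pricing classes:
`p_k = 1 - (k-1)/10`, i.e. `1, 0.9, 0.8, 0.7, 0.6, 0.5` (here `0`-indexed). -/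
noncomputable def classP : Fin 6 → ℝ := fun k => 1 - (k : ℕ) / 10

/-- The assignment probabilities `q = (0.183, 0.075, 0.075, 0.175, 0.261, 0.231)`. -/
noncomputable def classQ : Fin 6 → ℝ := ![0.183, 0.075, 0.075, 0.175, 0.261, 0.231]

/-! ### Auxiliary material -/

noncomputable def gIE : Fin 6 → Fin 6 → ℝ := fun l k =>
  (if l < k then 1 else if l = k then 1/2 else 0) * (classP l * (classP k * (1 - classP k)))

lemma cq0 : classQ 0 = 0.183 := rfl
lemma cq1 : classQ 1 = 0.075 := rfl
lemma cq2 : classQ 2 = 0.075 := rfl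
lemma cq3 : classQ 3 = 0.175 := rfl
lemma cq4 : classQ 4 = 0.261 := rfl
lemma cq5 : classQ 5 = 0.231 := rfl
lemma cp0 : classP 0 = 1 := by norm_num [classP]
lemma cp1 : classP 1 = 0.9 := by norm_num [classP, show ((1:Fin 6):ℕ) = 1 from rfl]
lemma cp2 : classP 2 = 0.8 := by norm_num [classP, show ((2:Fin 6):ℕ) = 2 from rfl]
lemma cp3 : classP 3 = 0.7 := by norm_num [classP, show ((3:Fin 6):ℕ) = 3 from rfl]
lemma cp4 : classP 4 = 0.6 := by norm_num [classP, show ((4:Fin 6):ℕ) = 4 from rfl]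
lemma cp5 : classP 5 = 0.5 := by norm_num [classP, show ((5:Fin 6):ℕ) = 5 from rfl]

lemma classQ_pos (k : Fin 6) : 0 < classQ k := by fin_cases k <;> norm_num [classQ]

lemma classQ_sum : ∑ k, classQ k = 1 := by
  simp only [Fin.sum_univ_six, cq0, cq1, cq2, cq3, cq4, cq5]; norm_num

lemma gIE_sum : ∑ l, ∑ k, classQ l * classQ k * gIE l k ≥ 0.3516/4 := by
  simp only [Fin.sum_univ_six, gIE]
  simp (config := { decide := true }) only []
  simp only [cq0, cq1, cq2, cq3, cq4, cq5, cp0, cp1, cp2, cp3, cp4, cp5]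
  norm_num

lemma conj1 : (∑ k, classQ k * classP k * (1 - classP k) *
        (classQ k * classP k / 2 +
          ∑ l ∈ univ.filter (fun l => l < k), classQ l * classP l)
      ≥ 0.3516 / 4) := by
  simp only [Finset.sum_filter, Fin.sum_univ_six]
  simp (config := { decide := true }) only []
  simp only [cq0, cq1, cq2, cq3, cq4, cq5, cp0, cp1, cp2, cp3, cp4, cp5]
  norm_num

section Marginal
variable {V : Type} [Fintype V] [DecidableEq V]

/-- factor function for marginalization -/
noncomputable def ff (i j : V) (l k : Fin 6) (m : V) (x : Fin 6) : ℝ :=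
  classQ x * (if m = i then (if x = l then 1 else 0)
    else if m = j then (if x = k then 1 else 0) else 1)

lemma prod_ind {i j : V} (hij : i ≠ j) (a : V → Fin 6) (l k : Fin 6) :
    (∏ m : V, ff i j l k m (a m))
    = (∏ m : V, classQ (a m)) * ((if a i = l then 1 else 0) * (if a j = k then 1 else 0)) := by
  unfold ff
  rw [Finset.prod_mul_distrib]
  congr 1
  rw [← Finset.mul_prod_erase univ _ (mem_univ i),
      ← Finset.mul_prod_erase _ _ (Finset.mem_erase.2 ⟨Ne.symm hij, mem_univ j⟩)]
  rw [Finset.prod_eq_one (fun m hm => by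
    simp only [Finset.mem_erase] at hm
    rw [if_neg hm.2.1, if_neg hm.1])]
  rw [if_pos rfl, if_neg (Ne.symm hij), if_pos rfl, mul_one]

lemma sum_prod_classQ {i j : V} (hij : i ≠ j) (l k : Fin 6) :
    ∑ a : V → Fin 6, (∏ m, classQ (a m)) *
        ((if a i = l then (1:ℝ) else 0) * (if a j = k then 1 else 0))
      = classQ l * classQ k := by
  have h1 : ∀ a : V → Fin 6, (∏ m, classQ (a m)) *
      ((if a i = l then (1:ℝ) else 0) * (if a j = k then 1 else 0))
      = ∏ m : V, ff i j l k m (a m) := fun a => (prod_ind hij a l k).symm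
  rw [Finset.sum_congr rfl (fun a _ => h1 a), ← Fintype.piFinset_univ, ← Finset.prod_univ_sum]
  have h2 : ∀ m : V, ∑ x : Fin 6, ff i j l k m x =
      (if m = i then classQ l else if m = j then classQ k else 1) := by
    intro m
    by_cases hmi : m = i
    · simp only [ff, if_pos hmi, mul_ite, mul_one, mul_zero, Finset.sum_ite_eq', mem_univ, if_true]
    · by_cases hmj : m = j
      · simp only [ff, if_neg hmi, if_pos hmj, mul_ite, mul_one, mul_zero,
          Finset.sum_ite_eq', mem_univ, if_true]
      · simp only [ff, if_neg hmi, if_neg hmj, mul_one, classQ_sum]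
  rw [Finset.prod_congr rfl (fun m _ => h2 m)]
  rw [← Finset.mul_prod_erase univ _ (mem_univ i),
      ← Finset.mul_prod_erase _ _ (Finset.mem_erase.2 ⟨Ne.symm hij, mem_univ j⟩)]
  rw [Finset.prod_eq_one (fun m hm => by
    simp only [Finset.mem_erase] at hm
    rw [if_neg hm.2.1, if_neg hm.1])]
  rw [if_pos rfl, if_neg (Ne.symm hij), if_pos rfl, mul_one]

lemma marginal {i j : V} (hij : i ≠ j) (G : Fin 6 → Fin 6 → ℝ) :
    ∑ a : V → Fin 6, (∏ m, classQ (a m)) * G (a i) (a j)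
      = ∑ l, ∑ k, classQ l * classQ k * G l k := by
  have h1 : ∀ a : V → Fin 6, (∏ m, classQ (a m)) * G (a i) (a j)
      = ∑ l, ∑ k, ((∏ m, classQ (a m)) *
          ((if a i = l then (1:ℝ) else 0) * (if a j = k then 1 else 0))) * G l k := by
    intro a
    simp only [ite_mul, one_mul, zero_mul, mul_ite, mul_zero, Finset.sum_ite_eq, mem_univ, if_true]
    ring
  rw [Finset.sum_congr rfl (fun a _ => h1 a), Finset.sum_comm]
  refine Finset.sum_congr rfl (fun l _ => ?_)
  rw [Finset.sum_comm]
  refine Finset.sum_congr rfl (fun k _ => ?_)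
  rw [← Finset.sum_mul, sum_prod_classQ hij l k]

lemma sum_prod_classQ_one :
    ∑ a : V → Fin 6, (∏ m, classQ (a m)) = 1 := by
  rw [← Fintype.piFinset_univ, ← Finset.prod_univ_sum]
  simp [classQ_sum]

end Marginal

noncomputable def rankEquiv {V : Type} [Fintype V] [DecidableEq V] {K : Type} [LinearOrder K]
    (key : V → K) (hk : Function.Injective key) : V ≃ Fin (Fintype.card V) :=
  Equiv.ofBijective
    (fun v => ((univ.image key).orderIsoOfFin
        (by rw [Finset.card_image_of_injective _ hk, Finset.card_univ])).symm
      ⟨key v, Finset.mem_image_of_mem _ (mem_univ v)⟩)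
    (by
      rw [Fintype.bijective_iff_injective_and_card]
      refine ⟨fun x y hxy => ?_, by simp⟩
      simp only at hxy
      have := ((univ.image key).orderIsoOfFin
        (by rw [Finset.card_image_of_injective _ hk, Finset.card_univ])).symm.injective hxy
      exact hk (congrArg Subtype.val this))

lemma rankEquiv_lt_iff {V : Type} [Fintype V] [DecidableEq V] {K : Type} [LinearOrder K]
    (key : V → K) (hk : Function.Injective key) (i j : V) :
    rankEquiv key hk i < rankEquiv key hk j ↔ key i < key j := by
  unfold rankEquiv
  rw [Equiv.ofBijective_apply, Equiv.ofBijective_apply, OrderIso.lt_iff_lt]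
  exact Subtype.mk_lt_mk

section Strategy
variable {V : Type} [Fintype V] [DecidableEq V]

/-- the (class, tie-break) key of a buyer -/
noncomputable def gkey (σ : V ≃ Fin (Fintype.card V)) (a : V → Fin 6) (b : Bool) (i : V) :
    Fin 6 ×ₗ Fin (Fintype.card V) :=
  toLex (a i, if b then σ i else (σ i).rev)

lemma gkey_inj (σ : V ≃ Fin (Fintype.card V)) (a : V → Fin 6) (b : Bool) :
    Function.Injective (gkey σ a b) := by
  intro x y hxy
  have h2 : (if b then σ x else (σ x).rev) = (if b then σ y else (σ y).rev) :=
    congrArg Prod.snd (toLex.injective hxy)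
  cases b <;> simp only [if_true, if_false, Bool.false_eq_true] at h2
  · exact σ.injective (Fin.rev_injective h2)
  · exact σ.injective h2

noncomputable def gpi (σ : V ≃ Fin (Fintype.card V)) (a : V → Fin 6) (b : Bool) :
    V ≃ Fin (Fintype.card V) :=
  rankEquiv (gkey σ a b) (gkey_inj σ a b)

lemma gpi_lt (σ : V ≃ Fin (Fintype.card V)) (a : V → Fin 6) (b : Bool) (i j : V) :
    gpi σ a b i < gpi σ a b j ↔ gkey σ a b i < gkey σ a b j :=
  rankEquiv_lt_iff _ _ i j

/-- averaging over the two orientations -/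
lemma bsum (σ : V ≃ Fin (Fintype.card V)) (a : V → Fin 6) {i j : V} (hij : i ≠ j) :
    ∑ b : Bool, (if gkey σ a b i < gkey σ a b j
        then classP (a i) * (classP (a j) * (1 - classP (a j))) else 0) / 2
      = gIE (a i) (a j) := by
  have hσ : σ i ≠ σ j := fun h => hij (σ.injective h)
  have ht : gkey σ a true i < gkey σ a true j ↔
      a i < a j ∨ (a i = a j ∧ σ i < σ j) := by
    unfold gkey; rw [Prod.Lex.lt_iff]; simp
  have hf : gkey σ a false i < gkey σ a false j ↔
      a i < a j ∨ (a i = a j ∧ σ j < σ i) := by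
    unfold gkey; rw [Prod.Lex.lt_iff]; simp [Fin.rev_lt_rev]
  rw [Fintype.sum_bool]
  unfold gIE
  rcases lt_trichotomy (a i) (a j) with h | h | h
  · rw [if_pos (ht.2 (Or.inl h)), if_pos (hf.2 (Or.inl h)), if_pos h]; ring
  · rcases hσ.lt_or_gt with hs | hs
    · rw [if_pos (ht.2 (Or.inr ⟨h, hs⟩)),
        if_neg (fun hc => by
          rcases hf.1 hc with hc | ⟨-, hc⟩
          exacts [absurd hc (by simp [h]), absurd hc (asymm hs)]),
        if_neg (by simp [h]), if_pos h]
      ring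
    · rw [if_neg (fun hc => by
          rcases ht.1 hc with hc | ⟨-, hc⟩
          exacts [absurd hc (by simp [h]), absurd hc (asymm hs)]),
        if_pos (hf.2 (Or.inr ⟨h, hs⟩)), if_neg (by simp [h]), if_pos h]
      ring
  · rw [if_neg (fun hc => by
        rcases ht.1 hc with hc | ⟨hc, -⟩
        exacts [absurd hc (asymm h), absurd hc h.ne']),
      if_neg (fun hc => by
        rcases hf.1 hc with hc | ⟨hc, -⟩
        exacts [absurd hc (asymm h), absurd hc h.ne']),
      if_neg (asymm h), if_neg h.ne']
    ring

end Strategy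

lemma exists_le_weighted {ι : Type} [Fintype ι] [Nonempty ι] (μ f : ι → ℝ)
    (hμ : ∀ x, 0 < μ x) (hs : ∑ x, μ x = 1) : ∃ x, ∑ y, μ y * f y ≤ f x := by
  by_contra h
  push_neg at h
  have hlt : ∑ y, μ y * f y < ∑ y, μ y * (∑ z, μ z * f z) :=
    Finset.sum_lt_sum_of_nonempty univ_nonempty
      (fun y _ => mul_lt_mul_of_pos_left (h y) (hμ y))
  rw [← Finset.sum_mul, hs, one_mul] at hlt
  exact lt_irrefl _ hlt

lemma dmaxRev_le {V : Type} [Fintype V] [DecidableEq V] (w : V → V → ℝ)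
    (hw : ∀ i j, 0 ≤ w i j) : dmaxRev w ≤ (∑ j, ∑ i, w i j) / 4 := by
  have hW : (0:ℝ) ≤ (∑ j, ∑ i, w i j) / 4 := by
    apply div_nonneg _ (by norm_num)
    exact Finset.sum_nonneg fun j _ => Finset.sum_nonneg fun i _ => hw i j
  apply Real.sSup_le _ hW
  rintro r ⟨π, p, hp, rfl⟩
  unfold drevenue
  have hb : ∀ j : V, p j * (1 - p j) * ∑ i ∈ univ.filter (fun i => π i < π j), p i * w i j
      ≤ (1/4) * ∑ i, w i j := by
    intro j
    have h1 : ∑ i ∈ univ.filter (fun i => π i < π j), p i * w i j ≤ ∑ i, w i j := by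
      calc ∑ i ∈ univ.filter (fun i => π i < π j), p i * w i j
          ≤ ∑ i ∈ univ.filter (fun i => π i < π j), w i j :=
            Finset.sum_le_sum fun i _ => mul_le_of_le_one_left (hw i j) (hp i).2
        _ ≤ ∑ i, w i j :=
            Finset.sum_le_sum_of_subset_of_nonneg (Finset.filter_subset _ _)
              (fun i _ _ => hw i j)
    have h0 : (0:ℝ) ≤ ∑ i ∈ univ.filter (fun i => π i < π j), p i * w i j :=
      Finset.sum_nonneg fun i _ =>
        mul_nonneg (le_trans (by norm_num) (hp i).1) (hw i j)
    have h3 : p j * (1 - p j) ≤ 1/4 := by nlinarith [(hp j).1, (hp j).2]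
    have h2 : 0 ≤ p j * (1 - p j) := by nlinarith [(hp j).1, (hp j).2]
    exact mul_le_mul h3 h1 h0 (by norm_num)
  calc ∑ j, p j * (1 - p j) * ∑ i ∈ univ.filter (fun i => π i < π j), p i * w i j
      ≤ ∑ j, (1/4) * ∑ i, w i j := Finset.sum_le_sum fun j _ => hb j
    _ = (∑ j, ∑ i, w i j) / 4 := by rw [← Finset.mul_sum]; ring

/-- main theorem -/
theorem generalizedIE_directed :
    (∑ k, classQ k * classP k * (1 - classP k) *
        (classQ k * classP k / 2 +
          ∑ l ∈ univ.filter (fun l => l < k), classQ l * classP l)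
      ≥ 0.3516 / 4) ∧
      ∀ (V : Type) [Fintype V] [DecidableEq V] (w : V → V → ℝ),
        (∀ i j, 0 ≤ w i j) → (∀ i, w i i = 0) →
        ∃ (π : V ≃ Fin (Fintype.card V)) (p : V → ℝ),
          (∀ i, p i ∈ ({1, 0.9, 0.8, 0.7, 0.6, 0.5} : Set ℝ)) ∧
          drevenue w π p ≥ 0.3516 * dmaxRev w := by
  constructor
  · exact conj1
  · intro V _ _ w hw hdiag
    classical
    set σ : V ≃ Fin (Fintype.card V) := Fintype.equivFin V with hσdef
    set Sconst : ℝ := ∑ l, ∑ k, classQ l * classQ k * gIE l k with hSdef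
    set W : ℝ := ∑ j, ∑ i, w i j with hWdef
    set μ : ((V → Fin 6) × Bool) → ℝ := fun x => (∏ m, classQ (x.1 m)) / 2 with hμdef
    set f : ((V → Fin 6) × Bool) → ℝ :=
      fun x => drevenue w (gpi σ x.1 x.2) (fun i => classP (x.1 i)) with hfdef
    -- rewriting of the revenue
    have hrev : ∀ (a : V → Fin 6) (b : Bool),
        drevenue w (gpi σ a b) (fun i => classP (a i)) =
        ∑ j, ∑ i, (if gkey σ a b i < gkey σ a b j
          then classP (a i) * (classP (a j) * (1 - classP (a j))) * w i j else 0) := by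
      intro a b
      unfold drevenue
      refine Finset.sum_congr rfl (fun j _ => ?_)
      rw [Finset.sum_filter, Finset.mul_sum]
      refine Finset.sum_congr rfl (fun i _ => ?_)
      simp only [gpi_lt]
      by_cases hc : gkey σ a b i < gkey σ a b j
      · rw [if_pos hc, if_pos hc]; ring
      · rw [if_neg hc, if_neg hc]; ring
    -- total mass 1
    have hμsum : ∑ x : (V → Fin 6) × Bool, μ x = 1 := by
      rw [Fintype.sum_prod_type]
      have h : ∀ a : V → Fin 6, ∑ b : Bool, μ (a, b) = ∏ m, classQ (a m) := by
        intro a; rw [Fintype.sum_bool]; simp only [hμdef]; ring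
      rw [Finset.sum_congr rfl fun a _ => h a, sum_prod_classQ_one]
    have hμpos : ∀ x : (V → Fin 6) × Bool, 0 < μ x := fun x =>
      div_pos (Finset.prod_pos fun m _ => classQ_pos _) two_pos
    -- per-pair expectation over orientations
    have key2 : ∀ (a : V → Fin 6) (j i : V), (∑ b : Bool,
        (∏ m, classQ (a m)) / 2 * (if gkey σ a b i < gkey σ a b j
          then classP (a i) * (classP (a j) * (1 - classP (a j))) * w i j else 0))
        = (∏ m, classQ (a m)) * gIE (a i) (a j) * w i j := by
      intro a j i
      by_cases hij : i = j
      · subst hij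
        simp [hdiag i]
      · have hb := bsum σ a hij
        calc (∑ b : Bool, (∏ m, classQ (a m)) / 2 *
                (if gkey σ a b i < gkey σ a b j
                  then classP (a i) * (classP (a j) * (1 - classP (a j))) * w i j else 0))
            = (∏ m, classQ (a m)) * w i j * ∑ b : Bool,
                (if gkey σ a b i < gkey σ a b j
                  then classP (a i) * (classP (a j) * (1 - classP (a j))) else 0) / 2 := by
              rw [Finset.mul_sum]
              refine Finset.sum_congr rfl fun b _ => ?_
              by_cases hc : gkey σ a b i < gkey σ a b j
              · rw [if_pos hc, if_pos hc]; ring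
              · rw [if_neg hc, if_neg hc]; ring
          _ = (∏ m, classQ (a m)) * gIE (a i) (a j) * w i j := by rw [hb]; ring
    -- the expected revenue
    have hE : ∑ x : (V → Fin 6) × Bool, μ x * f x = Sconst * W := by
      rw [Fintype.sum_prod_type]
      have h1 : ∀ a : V → Fin 6, (∑ b : Bool, μ (a, b) * f (a, b))
          = ∑ j, ∑ i, (∏ m, classQ (a m)) * gIE (a i) (a j) * w i j := by
        intro a
        have h2 : ∀ b : Bool, μ (a, b) * f (a, b) = ∑ j, ∑ i,
            (∏ m, classQ (a m)) / 2 * (if gkey σ a b i < gkey σ a b j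
              then classP (a i) * (classP (a j) * (1 - classP (a j))) * w i j else 0) := by
          intro b
          simp only [hμdef, hfdef]
          rw [hrev a b, Finset.mul_sum]
          exact Finset.sum_congr rfl fun j _ => by rw [Finset.mul_sum]
        rw [Finset.sum_congr rfl fun b _ => h2 b, Finset.sum_comm]
        refine Finset.sum_congr rfl fun j _ => ?_
        rw [Finset.sum_comm]
        exact Finset.sum_congr rfl fun i _ => key2 a j i
      rw [Finset.sum_congr rfl fun a _ => h1 a, Finset.sum_comm]
      have h3 : ∀ j : V, (∑ a : V → Fin 6, ∑ i,
          (∏ m, classQ (a m)) * gIE (a i) (a j) * w i j) = ∑ i, Sconst * w i j := by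
        intro j
        rw [Finset.sum_comm]
        refine Finset.sum_congr rfl fun i _ => ?_
        by_cases hij : i = j
        · subst hij; rw [hdiag i]; simp
        · calc (∑ a : V → Fin 6, (∏ m, classQ (a m)) * gIE (a i) (a j) * w i j)
              = (∑ a : V → Fin 6, (∏ m, classQ (a m)) * gIE (a i) (a j)) * w i j := by
                rw [Finset.sum_mul]
            _ = Sconst * w i j := by rw [marginal hij gIE, ← hSdef]
      rw [Finset.sum_congr rfl fun j _ => h3 j, hWdef, Finset.mul_sum]
      exact Finset.sum_congr rfl fun j _ => by rw [Finset.mul_sum]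
    obtain ⟨x, hx⟩ := exists_le_weighted μ f hμpos hμsum
    refine ⟨gpi σ x.1 x.2, fun i => classP (x.1 i), fun i => ?_, ?_⟩
    · show classP (x.1 i) ∈ _
      generalize x.1 i = k
      fin_cases k <;>
        simp [cp0, cp1, cp2, cp3, cp4, cp5, Set.mem_insert_iff]
    · have hWnn : 0 ≤ W := by
        rw [hWdef]
        exact Finset.sum_nonneg fun j _ => Finset.sum_nonneg fun i _ => hw i j
      have h1 : dmaxRev w ≤ W / 4 := by rw [hWdef]; exact dmaxRev_le w hw
      have h2 : Sconst ≥ 0.3516 / 4 := by rw [hSdef]; exact gIE_sum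
      have h3 : Sconst * W ≤ f x := hE ▸ hx
      have hfinal : 0.3516 * dmaxRev w ≤ f x :=
        calc 0.3516 * dmaxRev w ≤ 0.3516 * (W / 4) :=
              mul_le_mul_of_nonneg_left h1 (by norm_num)
          _ = (0.3516 / 4) * W := by ring
          _ ≤ Sconst * W := mul_le_mul_of_nonneg_right h2 hWnn
          _ ≤ f x := h3
      simpa [hfdef] using hfinal
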